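/- Let ψ : ℝⁿ ⇉ ℝⁿ satisfy the (Γ₁)-condition and V : ℝⁿ → ℝⁿ be L-Lipschitz continuous and η-strongly monotone. Let μ > 0 and ρ > 0 satisfy ‖P_{ψ(r)}(y) − P_{ψ(s)}(y)‖ ≤ ρ‖r − s‖ for all y, r, s ∈ ℝⁿ, and assume θ := η − ρ − 1/2 − L²/2 − μ²/2 + μη > 0. Let x* be a solution of the inverse quasi-variational inequality problem. Then for all w ∈ ℝⁿ, θ₁ ‖V(w) − P_{ψ(w)}(V(w) − μw)‖² ≤ ⟨V(w) − P_{ψ(w)}(V(w) − μw), w − x*⟩, where θ₁ := θ / (2L + ρ + μ)². -/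

import Mathlib

/-!
Write `R w` for the natural residual `V w - P_{ψ w}(V w - μ w)` and `D = w - x*`. Since `x*` solves
the problem, `V x* = P_{ψ x*}(V x* - μ x*)`, so with `z' = P_{ψ w}(V x* - μ x*)` the residual splits
as `R w = (V w - V x*) + (V x* - z') + (z' - P_{ψ w}(V w - μ w))`. The middle term is at most
`ρ ‖D‖` by the Lipschitz dependence of the projections on the set, and the last one at most
`‖(V w - V x*) - μ D‖` by nonexpansiveness of `P_{ψ w}`, whose square is at most
`(L² - 2μη + μ²) ‖D‖²` by Lipschitz continuity and strong monotonicity. Hence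
`‖R w‖ ≤ (2L + ρ + μ) ‖D‖` and, pairing each term with `D` (the last one via AM-GM),
`θ ‖D‖² ≤ ⟪R w, D⟫`; combining the two gives the claim.
-/

open scoped RealInnerProductSpace

/- Metric projection onto a set `C ⊆ ℝⁿ`: when `C` is nonempty, closed and convex this is
the unique nearest point of `C`. -/
open Classical in
noncomputable def metricProj {d : ℕ} (C : Set (EuclideanSpace ℝ (Fin d)))
    (x : EuclideanSpace ℝ (Fin d)) : EuclideanSpace ℝ (Fin d) :=
  if h : ∃ y, y ∈ C ∧ ∀ z ∈ C, ‖x - y‖ ≤ ‖x - z‖ then h.choose else x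

section InnerProductSpace

variable {F : Type*} [NormedAddCommGroup F] [InnerProductSpace ℝ F]

theorem norm_sub_sq_le_inner_of_inner_le_zero {x y p q : F}
    (hp : ⟪x - p, q - p⟫ ≤ 0) (hq : ⟪y - q, p - q⟫ ≤ 0) :
    ‖p - q‖ ^ 2 ≤ ⟪x - y, p - q⟫ := by
  have h : ⟪x - y, p - q⟫ = ‖p - q‖ ^ 2 - ⟪x - p, q - p⟫ - ⟪y - q, p - q⟫ := by
    rw [← real_inner_self_eq_norm_sq]
    simp only [inner_sub_left, inner_sub_right, real_inner_comm]
    ring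
  linarith

theorem norm_sub_smul_sq_le {a D : F} {L η μ : ℝ} (hμ : 0 ≤ μ)
    (hL : ‖a‖ ≤ L * ‖D‖) (hη : η * ‖D‖ ^ 2 ≤ ⟪a, D⟫) :
    ‖a - μ • D‖ ^ 2 ≤ (L ^ 2 - 2 * μ * η + μ ^ 2) * ‖D‖ ^ 2 := by
  have ha : ‖a‖ ^ 2 ≤ (L * ‖D‖) ^ 2 := pow_le_pow_left₀ (norm_nonneg a) hL 2
  rw [norm_sub_sq_real, real_inner_smul_right, norm_smul, Real.norm_of_nonneg hμ]
  nlinarith [mul_le_mul_of_nonneg_left hη hμ]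

end InnerProductSpace

section MetricProj

variable {d : ℕ} {C : Set (EuclideanSpace ℝ (Fin d))}

theorem metricProj_mem_and_norm_sub_eq_iInf (hC : C.Nonempty ∧ IsClosed C ∧ Convex ℝ C)
    (x : EuclideanSpace ℝ (Fin d)) :
    metricProj C x ∈ C ∧ ‖x - metricProj C x‖ = ⨅ c : C, ‖x - c‖ := by
  obtain ⟨hne, hcl, hco⟩ := hC
  have hbdd : BddBelow (Set.range fun c : C => ‖x - c‖) :=
    ⟨0, Set.forall_mem_range.2 fun _ => norm_nonneg _⟩
  have hex : ∃ y, y ∈ C ∧ ∀ z ∈ C, ‖x - y‖ ≤ ‖x - z‖ := by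
    obtain ⟨v, hv, hveq⟩ := exists_norm_eq_iInf_of_complete_convex hne hcl.isComplete hco x
    exact ⟨v, hv, fun z hz => hveq ▸ ciInf_le hbdd ⟨z, hz⟩⟩
  obtain ⟨hmem, hmin⟩ := hex.choose_spec
  rw [metricProj, dif_pos hex]
  have : Nonempty C := hne.to_subtype
  exact ⟨hmem, le_antisymm (le_ciInf fun c => hmin c c.2) (ciInf_le hbdd ⟨_, hmem⟩)⟩

theorem metricProj_mem (hC : C.Nonempty ∧ IsClosed C ∧ Convex ℝ C)
    (x : EuclideanSpace ℝ (Fin d)) : metricProj C x ∈ C :=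
  (metricProj_mem_and_norm_sub_eq_iInf hC x).1

theorem inner_sub_metricProj_le_zero (hC : C.Nonempty ∧ IsClosed C ∧ Convex ℝ C)
    (x : EuclideanSpace ℝ (Fin d)) {c} (hc : c ∈ C) :
    ⟪x - metricProj C x, c - metricProj C x⟫ ≤ 0 := by
  obtain ⟨hmem, heq⟩ := metricProj_mem_and_norm_sub_eq_iInf hC x
  exact (norm_eq_iInf_iff_real_inner_le_zero hC.2.2 hmem).mp heq c hc

theorem metricProj_eq_of_inner_le_zero (hC : C.Nonempty ∧ IsClosed C ∧ Convex ℝ C)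
    {x v : EuclideanSpace ℝ (Fin d)} (hv : v ∈ C) (h : ∀ c ∈ C, ⟪x - v, c - v⟫ ≤ 0) :
    metricProj C x = v := by
  have hsq := norm_sub_sq_le_inner_of_inner_le_zero
    (inner_sub_metricProj_le_zero hC x hv) (h _ (metricProj_mem hC x))
  rw [sub_self, inner_zero_left] at hsq
  exact sub_eq_zero.mp (norm_eq_zero.mp (pow_eq_zero_iff two_ne_zero |>.mp
    (le_antisymm hsq (sq_nonneg _))))

theorem norm_metricProj_sub_metricProj_le (hC : C.Nonempty ∧ IsClosed C ∧ Convex ℝ C)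
    (x y : EuclideanSpace ℝ (Fin d)) :
    ‖metricProj C x - metricProj C y‖ ≤ ‖x - y‖ := by
  have hsq := norm_sub_sq_le_inner_of_inner_le_zero
    (inner_sub_metricProj_le_zero hC x (metricProj_mem hC y))
    (inner_sub_metricProj_le_zero hC y (metricProj_mem hC x))
  have hcs := real_inner_le_norm (x - y) (metricProj C x - metricProj C y)
  nlinarith [norm_nonneg (metricProj C x - metricProj C y), norm_nonneg (x - y)]

theorem metricProj_sub_smul_eq (hC : C.Nonempty ∧ IsClosed C ∧ Convex ℝ C)
    {v x : EuclideanSpace ℝ (Fin d)} {μ : ℝ} (hμ : 0 ≤ μ) (hv : v ∈ C)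
    (hx : ∀ c ∈ C, 0 ≤ ⟪x, c - v⟫) : metricProj C (v - μ • x) = v := by
  refine metricProj_eq_of_inner_le_zero hC hv fun c hc => ?_
  rw [sub_sub_cancel_left, inner_neg_left, real_inner_smul_left, neg_nonpos]
  exact mul_nonneg hμ (hx c hc)

end MetricProj

section InverseQVI

variable {d : ℕ}

noncomputable def naturalResidual (ψ : EuclideanSpace ℝ (Fin d) → Set (EuclideanSpace ℝ (Fin d)))
    (V : EuclideanSpace ℝ (Fin d) → EuclideanSpace ℝ (Fin d)) (μ : ℝ)
    (w : EuclideanSpace ℝ (Fin d)) : EuclideanSpace ℝ (Fin d) :=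
  V w - metricProj (ψ w) (V w - μ • w)

def IsIQVISolution (ψ : EuclideanSpace ℝ (Fin d) → Set (EuclideanSpace ℝ (Fin d)))
    (V : EuclideanSpace ℝ (Fin d) → EuclideanSpace ℝ (Fin d)) (xs : EuclideanSpace ℝ (Fin d)) :
    Prop :=
  V xs ∈ ψ xs ∧ ∀ z ∈ ψ xs, 0 ≤ ⟪xs, z - V xs⟫

variable {ψ : EuclideanSpace ℝ (Fin d) → Set (EuclideanSpace ℝ (Fin d))}
  {V : EuclideanSpace ℝ (Fin d) → EuclideanSpace ℝ (Fin d)} {L η μ ρ : ℝ}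
  {xs : EuclideanSpace ℝ (Fin d)}

theorem norm_solution_sub_metricProj_le
    (hΓ₁ : ∀ x, (ψ x).Nonempty ∧ IsClosed (ψ x) ∧ Convex ℝ (ψ x)) (hμ : 0 ≤ μ)
    (hproj : ∀ y r s, ‖metricProj (ψ r) y - metricProj (ψ s) y‖ ≤ ρ * ‖r - s‖)
    (hxs : IsIQVISolution ψ V xs) (w : EuclideanSpace ℝ (Fin d)) :
    ‖V xs - metricProj (ψ w) (V xs - μ • xs)‖ ≤ ρ * ‖w - xs‖ := by
  calc ‖V xs - metricProj (ψ w) (V xs - μ • xs)‖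
      = ‖metricProj (ψ xs) (V xs - μ • xs) - metricProj (ψ w) (V xs - μ • xs)‖ := by
        rw [metricProj_sub_smul_eq (hΓ₁ xs) hμ hxs.1 hxs.2]
    _ ≤ ρ * ‖xs - w‖ := hproj _ _ _
    _ = ρ * ‖w - xs‖ := by rw [norm_sub_rev]

theorem norm_metricProj_sub_smul_sub_le
    (hΓ₁ : ∀ x, (ψ x).Nonempty ∧ IsClosed (ψ x) ∧ Convex ℝ (ψ x)) (w : EuclideanSpace ℝ (Fin d)) :
    ‖metricProj (ψ w) (V w - μ • w) - metricProj (ψ w) (V xs - μ • xs)‖ ≤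
      ‖(V w - V xs) - μ • (w - xs)‖ := by
  have h := norm_metricProj_sub_metricProj_le (hΓ₁ w) (V w - μ • w) (V xs - μ • xs)
  rwa [show V w - μ • w - (V xs - μ • xs) = (V w - V xs) - μ • (w - xs) by module] at h

theorem naturalResidual_eq_add (w : EuclideanSpace ℝ (Fin d)) :
    naturalResidual ψ V μ w = (V w - V xs) + (V xs - metricProj (ψ w) (V xs - μ • xs)) +
      (metricProj (ψ w) (V xs - μ • xs) - metricProj (ψ w) (V w - μ • w)) := by
  rw [naturalResidual]; abel

theorem norm_naturalResidual_le
    (hΓ₁ : ∀ x, (ψ x).Nonempty ∧ IsClosed (ψ x) ∧ Convex ℝ (ψ x))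
    (hL : ∀ y z, ‖V y - V z‖ ≤ L * ‖y - z‖) (hμ : 0 ≤ μ)
    (hproj : ∀ y r s, ‖metricProj (ψ r) y - metricProj (ψ s) y‖ ≤ ρ * ‖r - s‖)
    (hxs : IsIQVISolution ψ V xs) (w : EuclideanSpace ℝ (Fin d)) :
    ‖naturalResidual ψ V μ w‖ ≤ (2 * L + ρ + μ) * ‖w - xs‖ := by
  have hproj_sol := norm_solution_sub_metricProj_le hΓ₁ hμ hproj hxs w
  have hforward : ‖(V w - V xs) - μ • (w - xs)‖ ≤ (L + μ) * ‖w - xs‖ := by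
    calc ‖(V w - V xs) - μ • (w - xs)‖ ≤ ‖V w - V xs‖ + ‖μ • (w - xs)‖ := norm_sub_le _ _
      _ ≤ L * ‖w - xs‖ + μ * ‖w - xs‖ := by
        rw [norm_smul, Real.norm_of_nonneg hμ]; gcongr; exact hL w xs
      _ = (L + μ) * ‖w - xs‖ := by ring
  have hdiff : ‖metricProj (ψ w) (V xs - μ • xs) - metricProj (ψ w) (V w - μ • w)‖ ≤
      (L + μ) * ‖w - xs‖ := by
    rw [norm_sub_rev]; exact (norm_metricProj_sub_smul_sub_le hΓ₁ w).trans hforward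
  calc ‖naturalResidual ψ V μ w‖ ≤ ‖V w - V xs‖ + ‖V xs - metricProj (ψ w) (V xs - μ • xs)‖ +
        ‖metricProj (ψ w) (V xs - μ • xs) - metricProj (ψ w) (V w - μ • w)‖ := by
        rw [naturalResidual_eq_add (xs := xs)]; exact norm_add₃_le
    _ ≤ L * ‖w - xs‖ + ρ * ‖w - xs‖ + (L + μ) * ‖w - xs‖ := by
        gcongr; exact hL w xs
    _ = (2 * L + ρ + μ) * ‖w - xs‖ := by ring

theorem le_inner_naturalResidual
    (hΓ₁ : ∀ x, (ψ x).Nonempty ∧ IsClosed (ψ x) ∧ Convex ℝ (ψ x))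
    (hL : ∀ y z, ‖V y - V z‖ ≤ L * ‖y - z‖)
    (hη : ∀ y z, η * ‖y - z‖ ^ 2 ≤ ⟪V y - V z, y - z⟫) (hμ : 0 ≤ μ)
    (hproj : ∀ y r s, ‖metricProj (ψ r) y - metricProj (ψ s) y‖ ≤ ρ * ‖r - s‖)
    (hxs : IsIQVISolution ψ V xs) (w : EuclideanSpace ℝ (Fin d)) :
    (η - ρ - 1/2 - L^2/2 - μ^2/2 + μ*η) * ‖w - xs‖ ^ 2 ≤
      ⟪naturalResidual ψ V μ w, w - xs⟫ := by
  set n := ‖w - xs‖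
  set z := metricProj (ψ w) (V w - μ • w)
  set z' := metricProj (ψ w) (V xs - μ • xs)
  have hsol : -(ρ * n * n) ≤ ⟪V xs - z', w - xs⟫ :=
    (neg_le_neg (by gcongr; exact norm_solution_sub_metricProj_le hΓ₁ hμ hproj hxs w)).trans
      (neg_le_of_abs_le (abs_real_inner_le_norm _ _))
  have hdiff_sq : ‖z' - z‖ ^ 2 ≤ (L ^ 2 - 2 * μ * η + μ ^ 2) * n ^ 2 := by
    rw [norm_sub_rev]
    exact (pow_le_pow_left₀ (norm_nonneg _)
      (norm_metricProj_sub_smul_sub_le hΓ₁ w) 2).trans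
      (norm_sub_smul_sq_le hμ (hL w xs) (hη w xs))
  have hdiff : -((‖z' - z‖ ^ 2 + n ^ 2) / 2) ≤ ⟪z' - z, w - xs⟫ :=
    (neg_le_neg (by linarith [two_mul_le_add_sq ‖z' - z‖ n])).trans
      (neg_le_of_abs_le (abs_real_inner_le_norm _ _))
  rw [naturalResidual_eq_add (xs := xs), inner_add_left, inner_add_left]
  nlinarith [hη w xs]

end InverseQVI

theorem stmt_6_general {d : ℕ} (ψ : EuclideanSpace ℝ (Fin d) → Set (EuclideanSpace ℝ (Fin d)))
    (V : EuclideanSpace ℝ (Fin d) → EuclideanSpace ℝ (Fin d)) (L η μ ρ θ θ₁ : ℝ)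
    (hΓ₁ : ∀ x, (ψ x).Nonempty ∧ IsClosed (ψ x) ∧ Convex ℝ (ψ x))
    (hL : ∀ y z, ‖V y - V z‖ ≤ L * ‖y - z‖)
    (hη : ∀ y z, η * ‖y - z‖ ^ 2 ≤ ⟪V y - V z, y - z⟫)
    (hμ : 0 < μ)
    (hproj : ∀ y r s, ‖metricProj (ψ r) y - metricProj (ψ s) y‖ ≤ ρ * ‖r - s‖)
    (hθ : θ = η - ρ - 1/2 - L^2/2 - μ^2/2 + μ*η) (hθpos : 0 < θ)
    (hθ₁ : θ₁ = θ / (2*L + ρ + μ)^2)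
    (xs : EuclideanSpace ℝ (Fin d))
    (hxs : V xs ∈ ψ xs ∧ ∀ z ∈ ψ xs, 0 ≤ ⟪xs, z - V xs⟫) :
    ∀ w : EuclideanSpace ℝ (Fin d),
      θ₁ * ‖V w - metricProj (ψ w) (V w - μ • w)‖ ^ 2 ≤
        ⟪V w - metricProj (ψ w) (V w - μ • w), w - xs⟫ := by
  intro w
  have hnorm := norm_naturalResidual_le hΓ₁ hL hμ.le hproj hxs w
  have hinner := le_inner_naturalResidual hΓ₁ hL hη hμ.le hproj hxs w
  have hθ₁_nonneg : 0 ≤ θ₁ := hθ₁ ▸ by positivity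
  have hθ₁_mul_le : θ₁ * (2 * L + ρ + μ) ^ 2 ≤ θ := by
    rcases eq_or_ne ((2 * L + ρ + μ) ^ 2) 0 with h | h
    · rw [h, mul_zero]; exact hθpos.le
    · rw [hθ₁, div_mul_cancel₀ _ h]
  calc θ₁ * ‖naturalResidual ψ V μ w‖ ^ 2
      ≤ θ₁ * ((2 * L + ρ + μ) * ‖w - xs‖) ^ 2 := by gcongr
    _ = θ₁ * (2 * L + ρ + μ) ^ 2 * ‖w - xs‖ ^ 2 := by ring
    _ ≤ θ * ‖w - xs‖ ^ 2 := by gcongr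
    _ ≤ ⟪naturalResidual ψ V μ w, w - xs⟫ := hθ ▸ hinner

/-- If `θ := η − ρ − 1/2 − L²/2 − μ²/2 + μη > 0` and `x*` solves the IQVIP, then
`θ₁ ‖V w − P_{ψ w}(V w − μ w)‖² ≤ ⟨V w − P_{ψ w}(V w − μ w), w − x*⟩` for all `w`, where
`θ₁ = θ/(2L + ρ + μ)²`. -/
theorem stmt_6 {d : ℕ} (ψ : EuclideanSpace ℝ (Fin d) → Set (EuclideanSpace ℝ (Fin d)))
    (V : EuclideanSpace ℝ (Fin d) → EuclideanSpace ℝ (Fin d)) (L η μ ρ θ θ₁ : ℝ)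
    (hΓ₁ : ∀ x, (ψ x).Nonempty ∧ IsClosed (ψ x) ∧ Convex ℝ (ψ x))
    (hL : ∀ y z, ‖V y - V z‖ ≤ L * ‖y - z‖)
    (hη : ∀ y z, η * ‖y - z‖ ^ 2 ≤ ⟪V y - V z, y - z⟫)
    (hμ : 0 < μ) (hρ : 0 < ρ)
    (hproj : ∀ y r s, ‖metricProj (ψ r) y - metricProj (ψ s) y‖ ≤ ρ * ‖r - s‖)
    (hθ : θ = η - ρ - 1/2 - L^2/2 - μ^2/2 + μ*η) (hθpos : 0 < θ)
    (hθ₁ : θ₁ = θ / (2*L + ρ + μ)^2)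
    (xs : EuclideanSpace ℝ (Fin d))
    (hxs : V xs ∈ ψ xs ∧ ∀ z ∈ ψ xs, 0 ≤ ⟪xs, z - V xs⟫) :
    ∀ w : EuclideanSpace ℝ (Fin d),
      θ₁ * ‖V w - metricProj (ψ w) (V w - μ • w)‖ ^ 2 ≤
        ⟪V w - metricProj (ψ w) (V w - μ • w), w - xs⟫ :=
  stmt_6_general ψ V L η μ ρ θ θ₁ hΓ₁ hL hη hμ hproj hθ hθpos hθ₁ xs hxs
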